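/- Let Γ be a tetravalent G-half-arc-transitive graph for some G ≤ Aut(Γ), let a = att_G(Γ) and let Q_G(Γ) = {q_t, q_h}. If a > 2 then q_t < a/2 and q_h < a/2, while if a = 2 then q_t = q_h = 1 = a/2. -/

import Mathlib

/-! Common definitions for tetravalent half-arc-transitive graph theory. -/

open SimpleGraph Set

namespace HalfArc

variable {V W : Type*}

/-- A subgroup of automorphisms acts transitively on the vertices. -/
def IsVertexTrans (Γ : SimpleGraph V) (G : Subgroup (Γ ≃g Γ)) : Prop :=
  ∀ u v : V, ∃ g ∈ G, g u = v

/-- A subgroup of automorphisms acts transitively on the edges. -/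
def IsEdgeTrans (Γ : SimpleGraph V) (G : Subgroup (Γ ≃g Γ)) : Prop :=
  ∀ ⦃u v u' v' : V⦄, Γ.Adj u v → Γ.Adj u' v' →
    ∃ g ∈ G, (g u = u' ∧ g v = v') ∨ (g u = v' ∧ g v = u')

/-- A subgroup of automorphisms acts transitively on the arcs (ordered pairs of
adjacent vertices). -/
def IsArcTrans (Γ : SimpleGraph V) (G : Subgroup (Γ ≃g Γ)) : Prop :=
  ∀ ⦃u v u' v' : V⦄, Γ.Adj u v → Γ.Adj u' v' → ∃ g ∈ G, g u = u' ∧ g v = v'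

/-- Half-arc-transitive: vertex- and edge- but not arc-transitive. -/
def IsHalfArcTrans (Γ : SimpleGraph V) (G : Subgroup (Γ ≃g Γ)) : Prop :=
  IsVertexTrans Γ G ∧ IsEdgeTrans Γ G ∧ ¬ IsArcTrans Γ G

/-- An alternating cycle of length `n` in a graph `Γ` whose edges carry an
orientation `O`: a cyclic sequence of pairwise distinct vertices in which
consecutive vertices are adjacent and any two consecutive edges have opposite
orientations. -/
structure AltCycle (Γ : SimpleGraph V) (O : V → V → Prop) (n : ℕ) where
  f : ZMod n → V
  inj : Function.Injective f
  adj : ∀ i, Γ.Adj (f i) (f (i + 1))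
  alt : ∀ i, O (f i) (f (i + 1)) ↔ O (f (i + 2)) (f (i + 1))

/-- The vertex set of an alternating cycle. -/
def cycVerts {Γ : SimpleGraph V} {O : V → V → Prop} {n : ℕ} (c : AltCycle Γ O n) : Set V :=
  Set.range c.f

/-- The edge set of an alternating cycle. -/
def cycEdges {Γ : SimpleGraph V} {O : V → V → Prop} {n : ℕ} (c : AltCycle Γ O n) :
    Set (Sym2 V) :=
  Set.range fun i => s(c.f i, c.f (i + 1))

/-- The sets of edges of alternating cycles (an alternating cycle, as a subgraph,
is determined by its edge set). -/
def IsAltEdgeSet (Γ : SimpleGraph V) (O : V → V → Prop) (n : ℕ) (E : Set (Sym2 V)) : Prop :=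
  ∃ c : AltCycle Γ O n, cycEdges c = E

/-- The vertex sets of alternating cycles. -/
def IsAltVertSet (Γ : SimpleGraph V) (O : V → V → Prop) (n : ℕ) (A : Set V) : Prop :=
  ∃ c : AltCycle Γ O n, cycVerts c = A

/-- The set of vertices covered by a set of edges. -/
def suppOf (E : Set (Sym2 V)) : Set V := {v | ∃ e ∈ E, v ∈ e}

/-- The graph of alternating cycles: its vertices are the alternating cycles
(represented by their edge sets), two of them adjacent whenever they share a vertex. -/
def altGraph (Γ : SimpleGraph V) (O : V → V → Prop) (n : ℕ) :
    SimpleGraph {E : Set (Sym2 V) // IsAltEdgeSet Γ O n E} where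
  Adj X Y := X ≠ Y ∧ (suppOf X.1 ∩ suppOf Y.1).Nonempty
  symm := by
    constructor
    rintro X Y ⟨hne, x, hx1, hx2⟩
    exact ⟨hne.symm, x, hx2, hx1⟩
  loopless := by constructor; rintro X ⟨hne, -⟩; exact hne rfl

/-- The attachment sets: nonempty intersections of (the vertex sets of) two distinct
alternating cycles. -/
def IsAttSet (Γ : SimpleGraph V) (O : V → V → Prop) (n : ℕ) (A : Set V) : Prop :=
  ∃ c c' : AltCycle Γ O n, cycEdges c ≠ cycEdges c' ∧ (cycVerts c ∩ cycVerts c').Nonempty ∧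
    A = cycVerts c ∩ cycVerts c'

/-- `attachmentIs Γ O n a` : any two distinct alternating cycles with nonempty
intersection meet in exactly `a` vertices. -/
def attachmentIs (Γ : SimpleGraph V) (O : V → V → Prop) (n a : ℕ) : Prop :=
  ∀ A : Set V, IsAttSet Γ O n A → A.ncard = a

/-- A `k`-step rotation of an alternating cycle (in one of the two directions). -/
def IsRot {Γ : SimpleGraph V} {O : V → V → Prop} {n : ℕ} (c : AltCycle Γ O n)
    (g : V → V) (k : ℕ) : Prop :=
  (∀ i, g (c.f i) = c.f (i + k)) ∨ (∀ i, g (c.f i) = c.f (i - k))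

/-- The setup of the paper: a finite connected tetravalent graph `Γ`, a subgroup `G`
of its automorphism group acting half-arc-transitively, one of the two `G`-induced
orientations `O` of the edges of `Γ` (an orbit of `G` on arcs), the `G`-radius `r`
(half the common length of all `G`-alternating cycles) and the `G`-attachment
number `att`, together with the basic structural facts relating them. -/
structure Setup (V : Type*) where
  Γ : SimpleGraph V
  finite : Finite V
  conn : Γ.Connected
  tetra : ∀ v : V, (Γ.neighborSet v).ncard = 4
  G : Subgroup (Γ ≃g Γ)
  hat : IsHalfArcTrans Γ G
  O : V → V → Prop
  O_adj : ∀ ⦃u v⦄, O u v → Γ.Adj u v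
  O_choice : ∀ ⦃u v⦄, Γ.Adj u v → (O u v ↔ ¬ O v u)
  O_inv : ∀ g ∈ G, ∀ ⦃u v⦄, O u v → O (g u) (g v)
  O_orbit : ∀ ⦃u v u' v'⦄, O u v → O u' v' → ∃ g ∈ G, g u = u' ∧ g v = v'
  r : ℕ
  r_pos : 0 < r
  /-- every vertex lies on exactly two `G`-alternating cycles, each of length `2 * r` -/
  alt_cover : ∀ v : V, {E : Set (Sym2 V) | IsAltEdgeSet Γ O (2 * r) E ∧ v ∈ suppOf E}.ncard = 2
  att : ℕ
  att_pos : 0 < att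
  /-- any two non-disjoint `G`-alternating cycles meet in exactly `att` vertices -/
  att_eq : attachmentIs Γ O (2 * r) att
  att_dvd : att ∣ 2 * r

namespace Setup

variable {V : Type*} (S : Setup V)

/-- The kernel of the action of `G` on the set of `G`-alternating cycles:
the elements of `G` fixing every `G`-alternating cycle setwise. -/
def altKernel : Subgroup (S.Γ ≃g S.Γ) where
  carrier := {g | g ∈ S.G ∧ ∀ E : Set (Sym2 V),
    IsAltEdgeSet S.Γ S.O (2 * S.r) E → Sym2.map (g : V → V) '' E = E}
  one_mem' := by
    refine ⟨S.G.one_mem, fun E _ => ?_⟩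
    have : Sym2.map ((1 : S.Γ ≃g S.Γ) : V → V) = id := by
      funext e
      have : ((1 : S.Γ ≃g S.Γ) : V → V) = id := rfl
      rw [this, Sym2.map_id, id]
    rw [this, Set.image_id]
  mul_mem' := by
    rintro g h ⟨hg, hg'⟩ ⟨hh, hh'⟩
    refine ⟨S.G.mul_mem hg hh, fun E hE => ?_⟩
    have hcomp : Sym2.map ((g * h : S.Γ ≃g S.Γ) : V → V)
        = Sym2.map (g : V → V) ∘ Sym2.map (h : V → V) := by
      funext e
      have : ((g * h : S.Γ ≃g S.Γ) : V → V) = (g : V → V) ∘ (h : V → V) := rfl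
      rw [this, Function.comp_apply, ← Sym2.map_map]
    rw [hcomp, Set.image_comp, hh' E hE, hg' E hE]
  inv_mem' := by
    rintro g ⟨hg, hg'⟩
    refine ⟨S.G.inv_mem hg, fun E hE => ?_⟩
    conv_lhs => rw [← hg' E hE]
    rw [← Set.image_comp]
    have : Sym2.map ((g⁻¹ : S.Γ ≃g S.Γ) : V → V) ∘ Sym2.map (g : V → V) = id := by
      funext e
      rw [Function.comp_apply, Sym2.map_map]
      have h1 : ((g⁻¹ : S.Γ ≃g S.Γ) : V → V) ∘ (g : V → V) = id := by
        funext v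
        exact g.toEquiv.symm_apply_apply v
      rw [h1, Sym2.map_id]
    rw [this, Set.image_id]

/-- The kernel of the action of `G` on a collection of sets of vertices. -/
def kernelOn (P : Set V → Prop) : Subgroup (S.Γ ≃g S.Γ) where
  carrier := {g | g ∈ S.G ∧ ∀ A : Set V, P A → (g : V → V) '' A = A}
  one_mem' := ⟨S.G.one_mem, fun A _ => by
    have : ((1 : S.Γ ≃g S.Γ) : V → V) = id := rfl
    rw [this, Set.image_id]⟩
  mul_mem' := by
    rintro g h ⟨hg, hg'⟩ ⟨hh, hh'⟩
    refine ⟨S.G.mul_mem hg hh, fun A hA => ?_⟩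
    have : ((g * h : S.Γ ≃g S.Γ) : V → V) = (g : V → V) ∘ (h : V → V) := rfl
    rw [this, Set.image_comp, hh' A hA, hg' A hA]
  inv_mem' := by
    rintro g ⟨hg, hg'⟩
    refine ⟨S.G.inv_mem hg, fun A hA => ?_⟩
    conv_lhs => rw [← hg' A hA]
    rw [← Set.image_comp]
    have : ((g⁻¹ : S.Γ ≃g S.Γ) : V → V) ∘ (g : V → V) = id := by
      funext v; exact g.toEquiv.symm_apply_apply v
    rw [this, Set.image_id]

/-- The kernel of the action of `G` on the set of all `G`-attachment sets. -/
def attKernel : Subgroup (S.Γ ≃g S.Γ) :=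
  S.kernelOn (IsAttSet S.Γ S.O (2 * S.r))

/-- The block `B_s(C; u_i) = {u_{i+2sj} : 0 ≤ j < att}` of Construction 5.3. -/
def blockSet (s : ℕ) (c : AltCycle S.Γ S.O (2 * S.r)) (i : ZMod (2 * S.r)) : Set V :=
  {v | ∃ j : ℕ, j < S.att ∧ v = c.f (i + (2 * s * j : ℕ))}

/-- The imprimitivity block system `B` of Construction 5.3. -/
def Blocks (s : ℕ) : Set (Set V) :=
  {A | ∃ (c : AltCycle S.Γ S.O (2 * S.r)) (i : ZMod (2 * S.r)), A = S.blockSet s c i}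

/-- The quotient graph `Γ_B` of `Γ` with respect to the block system `B`. -/
def quotGraph (s : ℕ) : SimpleGraph {A : Set V // A ∈ S.Blocks s} where
  Adj X Y := X ≠ Y ∧ ∃ u ∈ X.1, ∃ v ∈ Y.1, S.Γ.Adj u v
  symm := by
    constructor
    rintro X Y ⟨hne, u, hu, v, hv, ha⟩
    exact ⟨hne.symm, v, hv, u, hu, ha.symm⟩
  loopless := by constructor; rintro X ⟨hne, -⟩; exact hne rfl

/-- The kernel of the action of `G` on the quotient graph `Γ_B`. -/
def quotKernel (s : ℕ) : Subgroup (S.Γ ≃g S.Γ) :=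
  S.kernelOn (· ∈ S.Blocks s)

/-- The orientation of the edges of the quotient graph `Γ_B` induced by `O`. -/
def quotO (s : ℕ) (X Y : {A : Set V // A ∈ S.Blocks s}) : Prop :=
  ∃ u ∈ X.1, ∃ v ∈ Y.1, S.O u v

end Setup

/-- The data defining the parameters `q_t` and `q_h` of Section 3: a vertex `v`,
the two `G`-alternating cycles `c` and `c'` through `v` (with `v = u_0 = v_0` and
`v` the tail of the two arcs of `c` incident to it), and the minimality properties
defining `q_t` and `q_h`.  Here `ell = 2r/att`. -/
structure JumpData {V : Type*} (S : Setup V) where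
  v : V
  c : AltCycle S.Γ S.O (2 * S.r)
  c' : AltCycle S.Γ S.O (2 * S.r)
  ell : ℕ
  hell : S.att * ell = 2 * S.r
  hc : c.f 0 = v
  hc' : c'.f 0 = v
  hne : cycEdges c ≠ cycEdges c'
  htail₁ : S.O v (c.f 1)
  htail₂ : S.O v (c.f (-1))
  qt : ℕ
  qh : ℕ
  hqt : c'.f ((qt * ell : ℕ)) = c.f ((ell : ℕ)) ∨
    c'.f ((qt * ell : ℕ)) = c.f (-(ell : ZMod (2 * S.r)))
  hqt_min : ∀ m : ℕ, m < qt → ¬(c'.f ((m * ell : ℕ)) = c.f ((ell : ℕ)) ∨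
    c'.f ((m * ell : ℕ)) = c.f (-(ell : ZMod (2 * S.r))))
  hqh : c.f ((qh * ell : ℕ)) = c'.f ((ell : ℕ)) ∨
    c.f ((qh * ell : ℕ)) = c'.f (-(ell : ZMod (2 * S.r)))
  hqh_min : ∀ m : ℕ, m < qh → ¬(c.f ((m * ell : ℕ)) = c'.f ((ell : ℕ)) ∨
    c.f ((m * ell : ℕ)) = c'.f (-(ell : ZMod (2 * S.r))))

/-- The `G`-alternating jump `jum_G(Γ) = min {q_t, q_h}`. -/
def JumpData.jump {V : Type*} {S : Setup V} (J : JumpData S) : ℕ := min J.qt J.qh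

end HalfArc


/-! An element of `G` mapping the arc `(v, u₁)` to `(v, u₋₁)` reflects `C` about `v`. Since
in- and out-degrees are both two, it fixes or reflects `C'` as well. It thus sends the meeting
point `v_{q_t ℓ} ∈ {u_ℓ, u_{-ℓ}}` to `v_{(a - q_t) ℓ}` while swapping `u_ℓ` and `u_{-ℓ}`, which
are distinct when `a > 2`; minimality of `q_t` then gives `q_t < a - q_t`. When `a = 2` the only
available value is `q_t = 1`, as `0 < q_t < a` by periodicity. The same argument with a
reflection of `C'` handles `q_h`. -/

namespace HalfArc

variable {V : Type*}

lemma eq_or_eq_of_ncard_eq_two {s : Set V} (h : s.ncard = 2) {a b x : V}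
    (ha : a ∈ s) (hb : b ∈ s) (hab : a ≠ b) (hx : x ∈ s) : x = a ∨ x = b := by
  obtain ⟨y, z, -, rfl⟩ := Set.ncard_eq_two.mp h
  simp only [Set.mem_insert_iff, Set.mem_singleton_iff] at ha hb hx
  rcases ha with rfl | rfl <;> rcases hb with rfl | rfl <;> tauto

lemma natCast_ne_zero_of_lt {k n : ℕ} (hk : 0 < k) (hkn : k < n) : (k : ZMod n) ≠ 0 := by
  rw [Ne, ZMod.natCast_eq_zero_iff]
  exact fun h => (Nat.le_of_dvd hk h).not_gt hkn

namespace AltCycle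

variable {Γ : SimpleGraph V} {O : V → V → Prop} {n : ℕ}

def reverse (c : AltCycle Γ O n) : AltCycle Γ O n where
  f i := c.f (-i)
  inj a b h := neg_injective (c.inj h)
  adj i := by simpa [add_comm] using (c.adj (-(i + 1))).symm
  alt i := by
    have h := c.alt (-(i + 2))
    rw [show -(i + 2) + 1 = -(i + 1) by ring, show -(i + 2) + 2 = -i by ring] at h
    exact h.symm

@[simp] lemma reverse_f (c : AltCycle Γ O n) (i : ZMod n) : c.reverse.f i = c.f (-i) := rfl

def map (g : Γ ≃g Γ) (hg : ∀ u v, O (g u) (g v) ↔ O u v) (c : AltCycle Γ O n) :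
    AltCycle Γ O n where
  f i := g (c.f i)
  inj a b h := c.inj (g.injective h)
  adj i := g.map_adj_iff.mpr (c.adj i)
  alt i := by rw [hg, hg]; exact c.alt i

@[simp] lemma map_f (g : Γ ≃g Γ) (hg : ∀ u v, O (g u) (g v) ↔ O u v) (c : AltCycle Γ O n)
    (i : ZMod n) : (c.map g hg).f i = g (c.f i) := rfl

lemma adj_zero_one (c : AltCycle Γ O n) : Γ.Adj (c.f 0) (c.f 1) := by
  simpa using c.adj 0

lemma adj_zero_neg_one (c : AltCycle Γ O n) : Γ.Adj (c.f 0) (c.f (-1)) := by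
  simpa using (c.adj (-1)).symm

lemma O_neg_one_zero_iff (c : AltCycle Γ O n) : O (c.f (-1)) (c.f 0) ↔ O (c.f 1) (c.f 0) := by
  have h := c.alt (-1)
  rwa [show (-1 : ZMod n) + 1 = 0 by ring, show (-1 : ZMod n) + 2 = 1 by ring] at h

/-- `c (i + 2)` is the neighbour of `c (i + 1)` other than `c i` on the same side (in or out)
as `c i`. -/
lemma apply_add_two_eq (hO : ∀ ⦃u v⦄, Γ.Adj u v → (O u v ↔ ¬ O v u))
    (hout : ∀ u, {x | O u x}.ncard = 2) (hin : ∀ u, {x | O x u}.ncard = 2)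
    {c d : AltCycle Γ O n} {i : ZMod n} (h0 : c.f i = d.f i) (h1 : c.f (i + 1) = d.f (i + 1)) :
    c.f (i + 2) = d.f (i + 2) := by
  by_cases h2 : (2 : ZMod n) = 0
  · simpa [h2] using h0
  have hshift : ∀ e : AltCycle Γ O n, e.f (i + 2) ≠ e.f i := fun e h =>
    h2 (by simpa using e.inj h)
  have hadj : ∀ e : AltCycle Γ O n, Γ.Adj (e.f (i + 1)) (e.f (i + 2)) := fun e => by
    simpa [add_assoc, one_add_one_eq_two] using e.adj (i + 1)
  have hcd := d.alt i
  rw [← h0, ← h1] at hcd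
  have hdadj := hadj d
  rw [← h1] at hdadj
  obtain ⟨N, hN, hci, hc2, hd2⟩ : ∃ N : Set V, N.ncard = 2 ∧
      c.f i ∈ N ∧ c.f (i + 2) ∈ N ∧ d.f (i + 2) ∈ N := by
    by_cases h : O (c.f i) (c.f (i + 1))
    · exact ⟨_, hin _, h, (c.alt i).1 h, hcd.1 h⟩
    · exact ⟨_, hout _, (hO (c.adj i).symm).2 h, (hO (hadj c)).2 (mt (c.alt i).2 h),
        (hO hdadj).2 (mt hcd.2 h)⟩
  rcases eq_or_eq_of_ncard_eq_two hN hci hc2 (hshift c).symm hd2 with h | h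
  · exact absurd (h.trans h0) (hshift d)
  · exact h.symm

lemma f_eq_of_apply_zero_of_apply_one [NeZero n] (hO : ∀ ⦃u v⦄, Γ.Adj u v → (O u v ↔ ¬ O v u))
    (hout : ∀ u, {x | O u x}.ncard = 2) (hin : ∀ u, {x | O x u}.ncard = 2)
    {c d : AltCycle Γ O n} (h0 : c.f 0 = d.f 0) (h1 : c.f 1 = d.f 1) : c.f = d.f := by
  have h : ∀ m : ℕ, c.f m = d.f m ∧ c.f (m + 1 : ℕ) = d.f (m + 1 : ℕ) := by
    intro m
    induction m with
    | zero => simpa using ⟨h0, h1⟩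
    | succ k ih =>
      refine ⟨ih.2, ?_⟩
      push_cast at ih ⊢
      rw [add_assoc, one_add_one_eq_two]
      exact apply_add_two_eq hO hout hin ih.1 ih.2
  funext i
  simpa using (h i.val).1

end AltCycle

namespace Setup

variable (S : Setup V)

instance neZero_two_mul_r : NeZero (2 * S.r) := ⟨by have := S.r_pos; omega⟩

variable {S}

lemma O_map_iff {g : S.Γ ≃g S.Γ} (hg : g ∈ S.G) (u v : V) : S.O (g u) (g v) ↔ S.O u v :=
  ⟨fun h => by simpa using S.O_inv g⁻¹ (S.G.inv_mem hg) h, fun h => S.O_inv g hg h⟩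

lemma image_setOf_O_left {g : S.Γ ≃g S.Γ} (hg : g ∈ S.G) (u : V) :
    (g : V → V) '' {x | S.O u x} = {x | S.O (g u) x} := by
  ext y
  refine ⟨fun ⟨x, hx, hxy⟩ => hxy ▸ (O_map_iff hg u x).2 hx, fun hy => ⟨g.symm y, ?_, by simp⟩⟩
  rw [Set.mem_ofPred_eq, ← O_map_iff hg]
  simpa using hy

lemma image_setOf_O_right {g : S.Γ ≃g S.Γ} (hg : g ∈ S.G) (u : V) :
    (g : V → V) '' {x | S.O x u} = {x | S.O x (g u)} := by
  ext y
  refine ⟨fun ⟨x, hx, hxy⟩ => hxy ▸ (O_map_iff hg x u).2 hx, fun hy => ⟨g.symm y, ?_, by simp⟩⟩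
  rw [Set.mem_ofPred_eq, ← O_map_iff hg]
  simpa using hy

variable (S)

lemma ncard_out_eq (u w : V) : {x | S.O u x}.ncard = {x | S.O w x}.ncard := by
  obtain ⟨g, hg, rfl⟩ := S.hat.1 u w
  rw [← image_setOf_O_left hg, Set.ncard_image_of_injective _ g.injective]

lemma ncard_in_eq (u w : V) : {x | S.O x u}.ncard = {x | S.O x w}.ncard := by
  obtain ⟨g, hg, rfl⟩ := S.hat.1 u w
  rw [← image_setOf_O_right hg, Set.ncard_image_of_injective _ g.injective]

lemma ncard_out_add_ncard_in (u : V) : {x | S.O u x}.ncard + {x | S.O x u}.ncard = 4 := by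
  have := S.finite
  have hdisj : Disjoint {x | S.O u x} {x | S.O x u} :=
    Set.disjoint_left.2 fun x hx hx' => (S.O_choice (S.O_adj hx)).1 hx hx'
  have hunion : {x | S.O u x} ∪ {x | S.O x u} = S.Γ.neighborSet u := by
    ext x
    refine ⟨by rintro (h | h) <;> simp [S.O_adj h, (S.O_adj h).symm], fun h => ?_⟩
    by_cases hx : S.O x u
    · exact Or.inr hx
    · exact Or.inl ((S.O_choice h).2 hx)
  rw [← Set.ncard_union_eq hdisj, hunion, S.tetra u]

/-- Double counting arcs: out- and in-degrees are constant, so they agree. -/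
lemma ncard_out_eq_ncard_in (u : V) : {x | S.O u x}.ncard = {x | S.O x u}.ncard := by
  classical
  have := S.finite
  have := Fintype.ofFinite V
  refine Nat.eq_of_mul_eq_mul_left (Finset.univ_nonempty_iff.2 ⟨u⟩).card_pos
    (Finset.card_mul_eq_card_mul S.O (fun w _ => ?_) fun w _ => ?_)
  · rw [S.ncard_out_eq u w, Set.ncard_eq_toFinset_card', Set.toFinset_ofPred]; rfl
  · rw [S.ncard_in_eq u w, Set.ncard_eq_toFinset_card', Set.toFinset_ofPred]; rfl

lemma ncard_out_eq_two (u : V) : {x | S.O u x}.ncard = 2 := by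
  have := S.ncard_out_add_ncard_in u
  have := S.ncard_out_eq_ncard_in u
  omega

lemma ncard_in_eq_two (u : V) : {x | S.O x u}.ncard = 2 := by
  have := S.ncard_out_add_ncard_in u
  have := S.ncard_out_eq_ncard_in u
  omega

variable {n : ℕ} [NeZero n]

lemma f_eq_of_apply_zero_of_apply_one {c d : AltCycle S.Γ S.O n} (h0 : c.f 0 = d.f 0)
    (h1 : c.f 1 = d.f 1) : c.f = d.f :=
  AltCycle.f_eq_of_apply_zero_of_apply_one S.O_choice S.ncard_out_eq_two S.ncard_in_eq_two h0 h1

lemma exists_reflection (e : AltCycle S.Γ S.O n) : ∃ g ∈ S.G, ∀ i, g (e.f i) = e.f (-i) := by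
  obtain ⟨g, hg, h0, h1⟩ : ∃ g ∈ S.G, g (e.f 0) = e.f 0 ∧ g (e.f 1) = e.f (-1) := by
    by_cases h : S.O (e.f 0) (e.f 1)
    · have h' : S.O (e.f 0) (e.f (-1)) := (S.O_choice e.adj_zero_neg_one).2
        (mt e.O_neg_one_zero_iff.1 ((S.O_choice e.adj_zero_one).1 h))
      exact S.O_orbit h h'
    · have h' : S.O (e.f 1) (e.f 0) := (S.O_choice e.adj_zero_one.symm).2 h
      obtain ⟨g, hg, h1, h0⟩ := S.O_orbit h' (e.O_neg_one_zero_iff.2 h')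
      exact ⟨g, hg, h0, h1⟩
  have h : (e.map g (O_map_iff hg)).f = e.reverse.f :=
    S.f_eq_of_apply_zero_of_apply_one (by simpa using h0) (by simpa using h1)
  exact ⟨g, hg, congrFun h⟩

/-- `g` permutes the two neighbours of `e 0` on `e`, which form a full in- or
out-neighbourhood. -/
lemma fixes_or_reflects (h2 : (2 : ZMod n) ≠ 0) {e : AltCycle S.Γ S.O n} {g : S.Γ ≃g S.Γ}
    (hg : g ∈ S.G) (hfix : g (e.f 0) = e.f 0) :
    (∀ i, g (e.f i) = e.f i) ∨ ∀ i, g (e.f i) = e.f (-i) := by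
  have hne : e.f 1 ≠ e.f (-1) := fun h => h2 (by linear_combination e.inj h)
  obtain ⟨N, hN, h1, hm1, hg1⟩ : ∃ N : Set V, N.ncard = 2 ∧
      e.f 1 ∈ N ∧ e.f (-1) ∈ N ∧ g (e.f 1) ∈ N := by
    by_cases h : S.O (e.f 0) (e.f 1)
    · refine ⟨_, S.ncard_out_eq_two (e.f 0), h, (S.O_choice e.adj_zero_neg_one).2
        (mt e.O_neg_one_zero_iff.1 ((S.O_choice e.adj_zero_one).1 h)), ?_⟩
      rw [Set.mem_ofPred_eq, ← hfix, O_map_iff hg]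
      exact h
    · have h' : S.O (e.f 1) (e.f 0) := (S.O_choice e.adj_zero_one.symm).2 h
      refine ⟨_, S.ncard_in_eq_two (e.f 0), h', e.O_neg_one_zero_iff.2 h', ?_⟩
      rw [Set.mem_ofPred_eq, ← hfix, O_map_iff hg]
      exact h'
  rcases eq_or_eq_of_ncard_eq_two hN h1 hm1 hne hg1 with h | h
  · have h' : (e.map g (O_map_iff hg)).f = e.f :=
      S.f_eq_of_apply_zero_of_apply_one (by simpa using hfix) h
    exact Or.inl (congrFun h')
  · have h' : (e.map g (O_map_iff hg)).f = e.reverse.f :=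
      S.f_eq_of_apply_zero_of_apply_one (by simpa using hfix) h
    exact Or.inr (congrFun h')

end Setup

section Jump

variable {n : ℕ} (f f' : ZMod n → V) (ell : ℕ)

/-- For the two alternating cycles `f = C` and `f' = C'` through `v`, the least `m` with
`IsJump f f' ℓ m` is `q_t`; with the cycles swapped it is `q_h`. -/
def IsJump (m : ℕ) : Prop :=
  f' (m * ell : ℕ) = f (ell : ℕ) ∨ f' (m * ell : ℕ) = f (-(ell : ZMod n))

def IsFirstJump (q : ℕ) : Prop :=
  IsJump f f' ell q ∧ ∀ m < q, ¬ IsJump f f' ell m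

variable {f f' ell}

lemma natCast_mul_ne_zero [NeZero n] {a k : ℕ} (hn : a * ell = n) (hk : 0 < k) (hka : k < a) :
    ((k * ell : ℕ) : ZMod n) ≠ 0 := by
  have hell : 0 < ell := Nat.pos_of_ne_zero (right_ne_zero_of_mul (hn ▸ NeZero.ne n))
  exact natCast_ne_zero_of_lt (Nat.mul_pos hk hell) (hn ▸ Nat.mul_lt_mul_of_pos_right hka hell)

lemma isJump_mod {a : ℕ} (hn : a * ell = n) (m : ℕ) :
    IsJump f f' ell (m % a) ↔ IsJump f f' ell m := by
  have hper : ((m * ell : ℕ) : ZMod n) = (m % a * ell : ℕ) := by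
    have h : ((a * (m / a) * ell : ℕ) : ZMod n) = 0 :=
      (ZMod.natCast_eq_zero_iff _ _).2 ⟨m / a, by rw [← hn]; ring⟩
    conv_lhs => rw [← Nat.mod_add_div m a, add_mul, Nat.cast_add, h, add_zero]
  unfold IsJump
  rw [hper]

lemma IsFirstJump.pos {q : ℕ} (hq : IsFirstJump f f' ell q) (hf : f.Injective) (h0 : f' 0 = f 0)
    (hell : (ell : ZMod n) ≠ 0) : 0 < q := by
  refine Nat.pos_of_ne_zero fun hq0 => ?_
  rcases hq0 ▸ hq.1 with h | h <;> rw [zero_mul, Nat.cast_zero, h0] at h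
  · exact hell (hf h).symm
  · exact hell (neg_eq_zero.1 (hf h).symm)

lemma IsFirstJump.lt {a q : ℕ} (hq : IsFirstJump f f' ell q) (hn : a * ell = n) (ha : 0 < a) :
    q < a := by
  by_contra h
  exact hq.2 _ ((Nat.mod_lt q ha).trans_le (not_lt.1 h)) ((isJump_mod hn q).2 hq.1)

/-- `σ` sends a jump at `q` to a jump at `a - q`, and cannot fix the jump point itself. -/
lemma IsFirstJump.two_mul_lt [NeZero n] {a q : ℕ} {σ : V → V} (hq : IsFirstJump f f' ell q)
    (hf : f.Injective) (hn : a * ell = n) (ha : 2 < a) (hσ : ∀ i, σ (f i) = f (-i))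
    (hσ' : (∀ i, σ (f' i) = f' i) ∨ ∀ i, σ (f' i) = f' (-i)) : 2 * q < a := by
  have hne : f ell ≠ f (-ell) := fun h =>
    natCast_mul_ne_zero hn two_pos ha (by push_cast; linear_combination hf h)
  have hqa := hq.lt hn (by omega)
  have hσx : σ (f' (q * ell : ℕ)) ≠ f' (q * ell : ℕ) ∧ IsJump f (σ ∘ f') ell q := by
    rcases hq.1 with h | h <;> simp only [IsJump, Function.comp_apply, h, hσ, neg_neg] <;>
      simp [hne, hne.symm]
  rcases hσ' with hfix | hrev
  · exact absurd (hfix _) hσx.1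
  have hmirror : f' ((a - q) * ell : ℕ) = σ (f' (q * ell : ℕ)) := by
    have hcast : (((a - q) * ell : ℕ) : ZMod n) = -((q * ell : ℕ) : ZMod n) := by
      rw [eq_neg_iff_add_eq_zero, ← Nat.cast_add, ← add_mul, Nat.sub_add_cancel hqa.le, hn,
        ZMod.natCast_self]
    rw [hcast, hrev]
  have hle : q ≤ a - q := not_lt.1 fun h => hq.2 _ h (by
    unfold IsJump; rw [hmirror]; exact hσx.2)
  have hne' : a - q ≠ q := fun h => hσx.1 (by rw [← hmirror, h])
  omega

end Jump

end HalfArc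

open HalfArc

/-- if `a > 2` then `q_t, q_h < a/2`, while if `a = 2` then
`q_t = q_h = 1 = a/2`. -/
theorem statement_2 {V : Type*} (S : Setup V) (J : JumpData S) :
    (2 < S.att → 2 * J.qt < S.att ∧ 2 * J.qh < S.att) ∧
    (S.att = 2 → J.qt = 1 ∧ J.qh = 1 ∧ 1 = S.att / 2) := by
  have ht : IsFirstJump J.c.f J.c'.f J.ell J.qt := ⟨J.hqt, J.hqt_min⟩
  have hh : IsFirstJump J.c'.f J.c.f J.ell J.qh := ⟨J.hqh, J.hqh_min⟩
  have hv : J.c'.f 0 = J.c.f 0 := J.hc'.trans J.hc.symm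
  refine ⟨fun ha => ?_, fun ha => ?_⟩
  · have h2 : (2 : ZMod (2 * S.r)) ≠ 0 := fun h =>
      natCast_mul_ne_zero J.hell two_pos ha (by push_cast; rw [h, zero_mul])
    obtain ⟨g, hg, hgc⟩ := S.exists_reflection J.c
    obtain ⟨w, hw, hwc'⟩ := S.exists_reflection J.c'
    exact ⟨ht.two_mul_lt J.c.inj J.hell ha hgc
        (S.fixes_or_reflects h2 hg (by rw [hv, hgc, neg_zero])),
      hh.two_mul_lt J.c'.inj J.hell ha hwc'
        (S.fixes_or_reflects h2 hw (by rw [← hv, hwc', neg_zero]))⟩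
  · have hell : (J.ell : ZMod (2 * S.r)) ≠ 0 := by
      simpa using natCast_mul_ne_zero (k := 1) J.hell one_pos (by omega)
    have := ht.pos J.c.inj hv hell
    have := ht.lt J.hell (by omega)
    have := hh.pos J.c'.inj hv.symm hell
    have := hh.lt J.hell (by omega)
    omega
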